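/- Every tree T that is a caterpillar is nonrepetitively 148-choosable, assuming every path can be 148-list-coloured so that no subpath is repetitively coloured and no subpath is almost repetitively coloured. -/

import Mathlib

/-- A list of colours is repetitive if it has the form `l ++ l` with `l` nonempty. -/
def RepList {α : Type*} (m : List α) : Prop :=
  ∃ l : List α, l ≠ [] ∧ m = l ++ l

/-- A list of colours is almost repetitive if it has the form `l ++ x :: l` (odd order,
`ψ(v_i) = ψ(v_{p+i+1})` for `i ∈ [1,p]`) or `l ++ x :: y :: l` (even order,
`ψ(v_i) = ψ(v_{p+i+1})` for `i ∈ [1,p-1]`) with `l` nonempty. -/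
def AlmostRepList {α : Type*} (m : List α) : Prop :=
  ∃ l : List α, l ≠ [] ∧
    ((∃ x, m = l ++ x :: l) ∨ (∃ x y, m = l ++ x :: y :: l))

/-- A colouring `φ` of `G` is nonrepetitive if no path of `G` is repetitively coloured. -/
def Nonrepetitive {V α : Type*} (G : SimpleGraph V) (φ : V → α) : Prop :=
  ∀ ⦃u v : V⦄ (p : G.Walk u v), p.IsPath → ¬ RepList (p.support.map φ)

/-- A caterpillar: a tree having a path (the spine) such that every vertex is at
distance at most 1 from the spine. -/
def IsCaterpillar {V : Type*} (G : SimpleGraph V) : Prop :=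
  G.Connected ∧ G.IsAcyclic ∧
    ∃ (u v : V) (p : G.Walk u v), p.IsPath ∧
      ∀ w : V, w ∈ p.support ∨ ∃ x ∈ p.support, G.Adj x w

/-!
Colour the spine, a copy of a path graph, by the hypothesis, and give each leaf a colour from its
list avoiding the colours of its spine neighbour and of that vertex's at most two neighbours on the
spine. In a tree a path between spine vertices runs along the spine, and no two leaves are
adjacent, so every path is a spine path extended by at most one leaf at each end. If such a path is
repetitively coloured, dropping the leaf colours leaves either an almost repetitively coloured spine
path (odd order for one leaf, even order for two), or a spine path on one or two vertices whose last
colour is that of the first leaf, which the choice of leaf colours excludes.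
-/

open SimpleGraph

section Lists

variable {α : Type*}

theorem RepList.reverse {m : List α} (h : RepList m) : RepList m.reverse := by
  obtain ⟨l, hl, rfl⟩ := h
  exact ⟨l.reverse, by simpa using hl, by simp⟩

theorem AlmostRepList.reverse {m : List α} (h : AlmostRepList m) : AlmostRepList m.reverse := by
  obtain ⟨l, hl, ⟨x, rfl⟩ | ⟨x, y, rfl⟩⟩ := h
  · exact ⟨l.reverse, by simpa using hl, Or.inl ⟨x, by simp⟩⟩
  · exact ⟨l.reverse, by simpa using hl, Or.inr ⟨y, x, by simp⟩⟩

theorem not_repList_singleton (a : α) : ¬ RepList [a] := by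
  rintro ⟨_ | ⟨x, l⟩, hl, he⟩
  · exact hl rfl
  · simp at he

theorem RepList.eq_singleton_or_almostRepList_of_cons {c : α} {t : List α}
    (h : RepList (c :: t)) : t = [c] ∨ AlmostRepList t := by
  obtain ⟨_ | ⟨a, l⟩, hl, he⟩ := h
  · exact absurd rfl hl
  simp only [List.cons_append, List.cons.injEq] at he
  obtain ⟨rfl, rfl⟩ := he
  rcases l with _ | ⟨b, l⟩
  · exact Or.inl rfl
  · exact Or.inr ⟨b :: l, by simp, Or.inl ⟨c, rfl⟩⟩

theorem RepList.eq_pair_or_almostRepList_of_cons_append {c d : α} {t : List α}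
    (h : RepList (c :: (t ++ [d]))) : t = [] ∨ (∃ b, t = [b, c]) ∨ AlmostRepList t := by
  obtain ⟨_ | ⟨a, l⟩, hl, he⟩ := h
  · exact absurd rfl hl
  simp only [List.cons_append, List.cons.injEq] at he
  obtain ⟨rfl, he⟩ := he
  rcases l.eq_nil_or_concat with rfl | ⟨l, b, rfl⟩
  · left
    simpa using congrArg List.length he
  have he' : t ++ [d] = (l ++ b :: c :: l) ++ [b] := by simpa using he
  obtain ⟨rfl, -⟩ := List.append_inj' he' rfl
  rcases l with _ | ⟨x, l⟩
  · exact Or.inr (Or.inl ⟨b, rfl⟩)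
  · exact Or.inr (Or.inr ⟨x :: l, by simp, Or.inr ⟨b, c, rfl⟩⟩)

end Lists

namespace SimpleGraph

variable {V W α : Type*} {G : SimpleGraph V} {H : SimpleGraph W}

theorem Walk.exists_adj_of_map_support_eq_pair {i j : W} (p : H.Walk i j) (ψ : W → α)
    {x y : α} (h : p.support.map ψ = [x, y]) : ∃ k, H.Adj i k ∧ ψ k = y := by
  cases p with
  | nil => simp at h
  | cons hik p' =>
    rw [Walk.support_cons, ← p'.cons_tail_support] at h
    simp only [List.map_cons, List.cons.injEq] at h
    exact ⟨_, hik, h.2.1⟩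

theorem Walk.IsPath.mem_range_pathGraphCopy [DecidableEq V] {u v : V} {P : G.Walk u v}
    (hP : P.IsPath) {x : V} : x ∈ Set.range hP.pathGraphCopy ↔ x ∈ P.support := by
  constructor
  · rintro ⟨i, rfl⟩
    exact List.getElem_mem _
  · intro hx
    obtain ⟨k, hk, rfl⟩ := List.mem_iff_getElem.mp hx
    exact ⟨⟨k, by simpa using hk⟩, rfl⟩

theorem card_filter_eq_or_pathGraph_adj_le {n : ℕ} (i : Fin n)
    [DecidablePred fun j => j = i ∨ (pathGraph n).Adj i j] :
    (Finset.univ.filter fun j => j = i ∨ (pathGraph n).Adj i j).card ≤ 3 := by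
  calc _ ≤ (Finset.Icc (i.val - 1) (i.val + 1)).card := by
        refine Finset.card_le_card_of_injOn Fin.val (fun j hj => ?_) Fin.val_injective.injOn
        simp only [Finset.coe_filter, Finset.mem_univ, true_and, Set.mem_ofPred_eq,
          pathGraph_adj, ← Fin.val_inj] at hj
        simp only [Finset.coe_Icc, Set.mem_Icc]
        omega
    _ ≤ 3 := by simp only [Nat.card_Icc]; omega

theorem exists_mem_forall_ne_of_pathGraph {n : ℕ} (ψ : Fin n → α) (i : Fin n) {L : Finset α}
    (hL : 3 < L.card) : ∃ c ∈ L, ∀ j, j = i ∨ (pathGraph n).Adj i j → c ≠ ψ j := by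
  classical
  obtain ⟨c, hcL, hc⟩ := Finset.exists_mem_notMem_of_card_lt_card
    (s := (Finset.univ.filter fun j => j = i ∨ (pathGraph n).Adj i j).image ψ)
    (Finset.card_image_le.trans (card_filter_eq_or_pathGraph_adj_le i) |>.trans_lt hL)
  exact ⟨c, hcL, fun j hj hcj => hc (Finset.mem_image.mpr ⟨j, by simpa using hj, hcj.symm⟩)⟩

variable (hG : G.IsAcyclic) (hH : H.Connected) (f : Copy H G)
include hG hH

theorem IsAcyclic.exists_support_eq_map {i : W} {y : V} (q : G.Walk (f i) y) (hq : q.IsPath)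
    (hy : y ∈ Set.range f) : ∃ j, ∃ p : H.Walk i j, p.IsPath ∧ q.support = p.support.map f := by
  obtain ⟨j, rfl⟩ := hy
  obtain ⟨p, hp⟩ := (hH i j).exists_isPath
  have hqp : q = p.map f.toHom :=
    congrArg Subtype.val <| (hG.subsingleton_path _ _).elim ⟨q, hq⟩ ⟨_, hp.map f.injective⟩
  exact ⟨j, p, hp, by rw [hqp, Walk.support_map]; rfl⟩

theorem IsAcyclic.mem_range_of_mem_support {i : W} {y : V} (q : G.Walk (f i) y) (hq : q.IsPath)
    (hy : y ∈ Set.range f) {v : V} (hv : v ∈ q.support) : v ∈ Set.range f := by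
  obtain ⟨j, p, -, hsupp⟩ := hG.exists_support_eq_map hH f q hq hy
  rw [hsupp, List.mem_map] at hv
  obtain ⟨k, -, rfl⟩ := hv
  exact ⟨k, rfl⟩

theorem IsAcyclic.eq_of_adj_of_notMem_range {a : V} (ha : a ∉ Set.range f) {i j : W}
    (hi : G.Adj (f i) a) (hj : G.Adj (f j) a) : i = j := by
  by_contra hij
  have hq : (Walk.cons hi (Walk.cons hj.symm Walk.nil)).IsPath := by
    have hia : f i ≠ a := fun h => ha ⟨i, h⟩
    have hja : f j ≠ a := fun h => ha ⟨j, h⟩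
    have hfij : f i ≠ f j := fun h => hij (f.injective h)
    simp [Walk.cons_isPath_iff, hia, hja.symm, hfij]
  exact ha (hG.mem_range_of_mem_support hH f _ hq ⟨j, rfl⟩ (by simp))

theorem IsAcyclic.not_adj_of_notMem_range {a b : V} (ha : a ∉ Set.range f)
    (hb : b ∉ Set.range f) {i j : W} (hi : G.Adj (f i) a) (hj : G.Adj (f j) b) :
    ¬ G.Adj a b := by
  intro hab
  have hia : f i ≠ a := fun h => ha ⟨i, h⟩
  have hib : f i ≠ b := fun h => hb ⟨i, h⟩
  have hjb : f j ≠ b := fun h => hb ⟨j, h⟩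
  obtain rfl | hij := eq_or_ne i j
  · have hq : (Walk.cons hi (Walk.cons hab Walk.nil)).IsPath := by
      simp [Walk.cons_isPath_iff, hia, hib, hab.ne]
    exact hab.ne (hG.eq_snd_of_adj_start hq hj (by simp)).symm
  · have hq : (Walk.cons hi (Walk.cons hab (Walk.cons hj.symm Walk.nil))).IsPath := by
      have hja : f j ≠ a := fun h => ha ⟨j, h⟩
      have hfij : f i ≠ f j := fun h => hij (f.injective h)
      simp [Walk.cons_isPath_iff, hia, hib, hab.ne, hja.symm, hjb.symm, hfij]
    exact ha (hG.mem_range_of_mem_support hH f _ hq ⟨j, rfl⟩ (by simp))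

variable {anchor : V → W} (hanchor : ∀ a ∉ Set.range f, G.Adj (f (anchor a)) a)
include hanchor

theorem IsAcyclic.eq_anchor_of_adj {a c : V} (ha : a ∉ Set.range f) (hac : G.Adj a c) :
    c = f (anchor a) := by
  by_cases hc : c ∈ Set.range f
  · obtain ⟨i, rfl⟩ := hc
    rw [hG.eq_of_adj_of_notMem_range hH f ha hac.symm (hanchor a ha)]
  · exact absurd hac (hG.not_adj_of_notMem_range hH f ha hc (hanchor a ha) (hanchor c hc))

variable {φ : V → α} {ψ : W → α} (hφψ : φ ∘ f = ψ)
  (hψ : ∀ ⦃i j : W⦄ (p : H.Walk i j), p.IsPath →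
    ¬ RepList (p.support.map ψ) ∧ ¬ AlmostRepList (p.support.map ψ))
  (hleaf : ∀ a ∉ Set.range f, ∀ j, j = anchor a ∨ H.Adj (anchor a) j → φ a ≠ ψ j)
include hφψ hψ hleaf

theorem IsAcyclic.not_repList_of_notMem_range {a v : V} (q : G.Walk a v) (hq : q.IsPath)
    (ha : a ∉ Set.range f) : ¬ RepList (q.support.map φ) := by
  intro hrep
  cases q with
  | nil => exact not_repList_singleton _ hrep
  | cons hac q' =>
  obtain rfl := hG.eq_anchor_of_adj hH f hanchor ha hac
  have hq' := hq.of_cons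
  rw [Walk.support_cons, List.map_cons] at hrep
  by_cases hv : v ∈ Set.range f
  · obtain ⟨j, p, hp, hsupp⟩ := hG.exists_support_eq_map hH f q' hq' hv
    rw [hsupp, List.map_map, hφψ] at hrep
    rcases hrep.eq_singleton_or_almostRepList_of_cons with h | h
    · rw [← p.cons_tail_support] at h
      simp only [List.map_cons, List.cons.injEq] at h
      exact hleaf a ha _ (Or.inl rfl) h.1.symm
    · exact (hψ p hp).2 h
  · have hnil : ¬ q'.Nil := fun h => hv (h.eq ▸ ⟨_, rfl⟩)
    have hpen := hG.eq_anchor_of_adj hH f hanchor hv (q'.adj_penultimate hnil).symm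
    obtain ⟨j, p, hp, hsupp⟩ :=
      hG.exists_support_eq_map hH f q'.dropLast hq'.dropLast (hpen ▸ ⟨_, rfl⟩)
    rw [← Walk.support_dropLast_concat hnil, hsupp, List.map_append, List.map_map, hφψ] at hrep
    rcases hrep.eq_pair_or_almostRepList_of_cons_append with h | ⟨b, h⟩ | h
    · exact p.support_ne_nil (List.map_eq_nil_iff.mp h)
    · obtain ⟨k, hk, hψk⟩ := p.exists_adj_of_map_support_eq_pair ψ h
      exact hleaf a ha k (Or.inr hk) hψk.symm
    · exact (hψ p hp).2 h

theorem IsAcyclic.nonrepetitive_of_copy : Nonrepetitive G φ := by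
  intro u v q hq hrep
  by_cases hu : u ∈ Set.range f
  · by_cases hv : v ∈ Set.range f
    · obtain ⟨i, rfl⟩ := hu
      obtain ⟨j, p, hp, hsupp⟩ := hG.exists_support_eq_map hH f q hq hv
      rw [hsupp, List.map_map, hφψ] at hrep
      exact (hψ p hp).1 hrep
    · refine hG.not_repList_of_notMem_range hH f hanchor hφψ hψ hleaf q.reverse hq.reverse hv ?_
      rw [Walk.support_reverse, List.map_reverse]
      exact hrep.reverse
  · exact hG.not_repList_of_notMem_range hH f hanchor hφψ hψ hleaf q hq hu hrep

end SimpleGraph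

/-- Assuming every path can be 148-list-coloured so that no subpath is repetitively
coloured and no subpath is almost repetitively coloured, every caterpillar is
nonrepetitively 148-choosable. -/
theorem caterpillar_choosable
    (hpath : ∀ (n : ℕ) (L : Fin n → Finset ℕ), (∀ v, 148 ≤ (L v).card) →
      ∃ φ : Fin n → ℕ, (∀ v, φ v ∈ L v) ∧
        ∀ ⦃u v : Fin n⦄ (p : (SimpleGraph.pathGraph n).Walk u v), p.IsPath →
          ¬ RepList (p.support.map φ) ∧ ¬ AlmostRepList (p.support.map φ)) :
    ∀ (V : Type) (G : SimpleGraph V), IsCaterpillar G →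
      ∀ L : V → Finset ℕ, (∀ v, 148 ≤ (L v).card) →
        ∃ φ : V → ℕ, (∀ v, φ v ∈ L v) ∧ Nonrepetitive G φ := by
  classical
  rintro V G ⟨-, hG, u, v, P, hP, hcover⟩ L hL
  set f := hP.pathGraphCopy
  have hf : Function.Injective f := f.injective
  obtain ⟨ψ, hψL, hψ⟩ := hpath _ (L ∘ f) (fun i => hL _)
  have hanchor : ∀ a, ∃ i, a ∉ Set.range f → G.Adj (f i) a := by
    intro a
    rcases hcover a with ha | ⟨x, hx, hxa⟩
    · exact ⟨0, fun ha' => absurd (hP.mem_range_pathGraphCopy.mpr ha) ha'⟩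
    · obtain ⟨i, rfl⟩ := hP.mem_range_pathGraphCopy.mpr hx
      exact ⟨i, fun _ => hxa⟩
  choose anchor hanchor using hanchor
  choose c hcL hc using fun a =>
    exists_mem_forall_ne_of_pathGraph ψ (anchor a) (lt_of_lt_of_le (by norm_num) (hL a))
  refine ⟨Function.extend f ψ c, fun x => ?_, hG.nonrepetitive_of_copy (pathGraph_connected _) f
    hanchor (Function.extend_comp hf ψ c) hψ fun a ha => ?_⟩
  · by_cases hx : ∃ i, f i = x
    · obtain ⟨i, rfl⟩ := hx
      rw [hf.extend_apply]
      exact hψL i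
    · rw [Function.extend_apply' _ _ _ hx]
      exact hcL x
  · rw [Function.extend_apply' _ _ _ ha]
    exact hc a
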